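/- arXiv:2512.00206 — 5 statements merged into one kernel-verified Lean document; each statement's English description precedes it below -/
import Mathlib

section
/- Let μ be a q-tame Borel measure on ℝ² and a > 0. Then the function t ↦ λ_μ(a,t) is 1-Lipschitz: for all t, s ∈ ℝ, |λ_μ(a,t) − λ_μ(a,s)| ≤ |t − s|. -/
open MeasureTheory Set Filter

/-- The open quadrant `Q_{t,h} = (-∞, t-h) × (t+h, ∞)`. -/
def quadrant (t h : ℝ) : Set (ℝ × ℝ) := Set.Iio (t - h) ×ˢ Set.Ioi (t + h)

/-- A Borel measure on `ℝ²` is q-tame if every open quadrant has finite measure. -/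
def QTame (μ : Measure (ℝ × ℝ)) : Prop := ∀ t h : ℝ, 0 ≤ h → μ (quadrant t h) < ⊤

/-- The continuous persistence landscape `λ_μ(a,t) = sup {h > 0 : μ(Q_{t,h}) ≥ a}`,
with the convention `sup ∅ = 0` (which is the convention of `Real.sSup`). -/
noncomputable def landscape (μ : Measure (ℝ × ℝ)) (a t : ℝ) : ℝ :=
  sSup {h : ℝ | 0 < h ∧ a ≤ (μ (quadrant t h)).toReal}

lemma quadrant_subset (t s h : ℝ) (hh : |t - s| < h) :
    quadrant t h ⊆ quadrant s (h - |t - s|) := by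
  rintro ⟨x, y⟩ ⟨hx, hy⟩
  simp only [quadrant, Set.mem_prod, Set.mem_Iio, Set.mem_Ioi] at *
  have h1 := le_abs_self (t - s)
  have h2 := neg_abs_le (t - s)
  constructor <;> linarith

lemma mem_shift (μ : Measure (ℝ × ℝ)) (hμ : QTame μ) (a t s h : ℝ)
    (hh : |t - s| < h) (hmem : h ∈ {h : ℝ | 0 < h ∧ a ≤ (μ (quadrant t h)).toReal}) :
    h - |t - s| ∈ {h : ℝ | 0 < h ∧ a ≤ (μ (quadrant s h)).toReal} := by
  obtain ⟨hpos, hle⟩ := hmem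
  refine ⟨by linarith, hle.trans ?_⟩
  exact ENNReal.toReal_mono (hμ s _ (by linarith)).ne (measure_mono (quadrant_subset t s h hh))

lemma landscape_le (μ : Measure (ℝ × ℝ)) (hμ : QTame μ) (a : ℝ) (t s : ℝ) :
    landscape μ a t ≤ landscape μ a s + |t - s| := by
  set S : ℝ → Set ℝ := fun u => {h : ℝ | 0 < h ∧ a ≤ (μ (quadrant u h)).toReal} with hS
  by_cases hb : BddAbove (S s)
  · have hnn : 0 ≤ landscape μ a s := Real.sSup_nonneg (fun x hx => hx.1.le)
    apply Real.sSup_le _ (by positivity)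
    intro h hmem
    by_cases hc : |t - s| < h
    · have := mem_shift μ hμ a t s h hc hmem
      have := le_csSup hb this
      simp only [landscape]
      linarith
    · push_neg at hc
      linarith
  · -- S s unbounded ⇒ S t unbounded too, both sups are 0
    have hbt : ¬ BddAbove (S t) := by
      intro ⟨M, hM⟩
      apply hb
      refine ⟨max M 0 + |s - t| + |t - s| + 1, fun h hh => ?_⟩
      by_cases hc : |s - t| < h
      · have := mem_shift μ hμ a s t h hc hh
        have := (hM this).trans (le_max_left M 0)
        have := abs_nonneg (t - s)
        linarith
      · push_neg at hc
        have := abs_nonneg (t - s)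
        have := le_max_right M 0
        linarith
    have h1 : landscape μ a t = 0 := Real.sSup_of_not_bddAbove hbt
    have h2 : landscape μ a s = 0 := Real.sSup_of_not_bddAbove hb
    rw [h1, h2]
    simp [abs_nonneg]

theorem landscape_lipschitz (μ : Measure (ℝ × ℝ)) (hμ : QTame μ) (a : ℝ) (ha : 0 < a) :
    ∀ t s : ℝ, |landscape μ a t - landscape μ a s| ≤ |t - s| := by
  intro t s
  rw [abs_sub_le_iff]
  constructor
  · linarith [landscape_le μ hμ a t s]
  · have := landscape_le μ hμ a s t
    rw [abs_sub_comm] at this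
    linarith
end

section
/- Let μ be a q-tame Borel measure on ℝ² and t ∈ ℝ. Then the function a ↦ λ_μ(a,t) is left-continuous on (0,∞): for every a > 0, λ_μ(a,t) = inf{λ_μ(b,t) : 0 < b < a}. -/
open MeasureTheory Set Filter Topology

lemma quadrant_anti (t : ℝ) {h₁ h₂ : ℝ} (h : h₁ ≤ h₂) :
    quadrant t h₂ ⊆ quadrant t h₁ := by
  rintro ⟨x, y⟩ hxy
  simp only [quadrant, Set.mem_prod, Set.mem_Iio, Set.mem_Ioi] at hxy ⊢
  exact ⟨by linarith [hxy.1], by linarith [hxy.2]⟩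

lemma quadrant_measurable (t h : ℝ) : MeasurableSet (quadrant t h) :=
  (measurableSet_Iio).prod measurableSet_Ioi

lemma fval_anti (μ : Measure (ℝ × ℝ)) (hμ : QTame μ) (t : ℝ) {h₁ h₂ : ℝ}
    (h0 : 0 ≤ h₁) (hle : h₁ ≤ h₂) :
    (μ (quadrant t h₂)).toReal ≤ (μ (quadrant t h₁)).toReal :=
  ENNReal.toReal_mono (hμ t h₁ h0).ne (measure_mono (quadrant_anti t hle))

lemma landscape_bddAbove (μ : Measure (ℝ × ℝ)) (hμ : QTame μ) (t : ℝ) {b : ℝ} (hb : 0 < b) :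
    BddAbove {h : ℝ | 0 < h ∧ b ≤ (μ (quadrant t h)).toReal} := by
  have hanti : Antitone (fun n : ℕ => quadrant t n) := by
    intro m n hmn
    exact quadrant_anti t (by exact_mod_cast hmn)
  have hint : (⋂ n : ℕ, quadrant t n) = ∅ := by
    ext ⟨x, y⟩
    simp only [Set.mem_iInter, Set.mem_empty_iff_false, iff_false]
    intro h
    obtain ⟨n, hn⟩ := exists_nat_gt (t - x)
    have := (h n).1
    simp only [quadrant, Set.mem_prod, Set.mem_Iio, Set.mem_Ioi] at this
    linarith
  have htend : Tendsto (μ ∘ fun n : ℕ => quadrant t n) atTop (𝓝 (μ (⋂ n : ℕ, quadrant t n))) :=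
    tendsto_measure_iInter_atTop (s := fun n : ℕ => quadrant t n) (fun n => (quadrant_measurable t n).nullMeasurableSet)
      hanti ⟨0, by simpa using (hμ t 0 le_rfl).ne⟩
  rw [hint, measure_empty] at htend
  have : ∀ᶠ n : ℕ in atTop, μ (quadrant t n) < ENNReal.ofReal b := by
    apply htend.eventually_lt_const
    simpa using hb
  obtain ⟨N, hN⟩ := this.exists
  refine ⟨N, fun h hh => ?_⟩
  by_contra hlt
  push_neg at hlt
  have h1 : (μ (quadrant t h)).toReal ≤ (μ (quadrant t N)).toReal :=
    fval_anti μ hμ t (Nat.cast_nonneg N) hlt.le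
  have h2 : (μ (quadrant t N)).toReal < b := by
    rw [← ENNReal.ofReal_lt_ofReal_iff hb] at *
    calc ENNReal.ofReal (μ (quadrant t N)).toReal ≤ μ (quadrant t N) := ENNReal.ofReal_toReal_le
    _ < ENNReal.ofReal b := hN
  linarith [hh.2]

lemma landscape_nonneg (μ : Measure (ℝ × ℝ)) (a t : ℝ) : 0 ≤ landscape μ a t :=
  Real.sSup_nonneg (fun x hx => hx.1.le)

theorem landscape_left_continuous (μ : Measure (ℝ × ℝ)) (hμ : QTame μ) (t : ℝ) :
    ∀ a : ℝ, 0 < a →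
      landscape μ a t = sInf ((fun b => landscape μ b t) '' Set.Ioo 0 a) := by
  intro a ha
  have hne : ((fun b => landscape μ b t) '' Set.Ioo 0 a).Nonempty :=
    (Set.nonempty_Ioo.2 ha).image _
  have hbdd : BddBelow ((fun b => landscape μ b t) '' Set.Ioo 0 a) := by
    refine ⟨0, ?_⟩
    rintro x ⟨b, _, rfl⟩
    exact landscape_nonneg μ b t
  have hanti : ∀ b ∈ Set.Ioo (0:ℝ) a, landscape μ a t ≤ landscape μ b t := by
    intro b hb
    rcases Set.eq_empty_or_nonempty {h : ℝ | 0 < h ∧ a ≤ (μ (quadrant t h)).toReal} with he | hne'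
    · rw [landscape, he, Real.sSup_empty]
      exact landscape_nonneg μ b t
    · exact csSup_le_csSup (landscape_bddAbove μ hμ t hb.1) hne'
        (fun h hh => ⟨hh.1, le_trans hb.2.le hh.2⟩)
  refine le_antisymm (le_csInf hne ?_) ?_
  · rintro x ⟨b, hb, rfl⟩
    exact hanti b hb
  · -- sInf ≤ landscape μ a t
    refine le_of_forall_pos_le_add fun ε hε => ?_
    by_contra hcon
    push_neg at hcon
    set L := landscape μ a t with hL
    have hL0 : 0 ≤ L := landscape_nonneg μ a t
    have key : ∀ b ∈ Set.Ioo (0:ℝ) a, L + ε < landscape μ b t :=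
      fun b hb => lt_of_lt_of_le hcon (csInf_le hbdd ⟨b, hb, rfl⟩)
    have hfa : ∀ b ∈ Set.Ioo (0:ℝ) a, b ≤ (μ (quadrant t (L + ε/2))).toReal := by
      intro b hb
      have hSne : {h : ℝ | 0 < h ∧ b ≤ (μ (quadrant t h)).toReal}.Nonempty := by
        by_contra hemp
        rw [Set.not_nonempty_iff_eq_empty] at hemp
        have h0 : landscape μ b t = 0 := by rw [landscape, hemp, Real.sSup_empty]
        have := key b hb
        rw [h0] at this
        linarith
      have hlt : landscape μ b t - ε/2 < landscape μ b t := by linarith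
      obtain ⟨h, hh, hlt2⟩ := exists_lt_of_lt_csSup hSne hlt
      have hge : L + ε/2 ≤ h := by linarith [key b hb]
      calc b ≤ (μ (quadrant t h)).toReal := hh.2
        _ ≤ (μ (quadrant t (L + ε/2))).toReal := fval_anti μ hμ t (by linarith) hge
    have hfa' : a ≤ (μ (quadrant t (L + ε/2))).toReal := by
      refine le_of_forall_lt fun c hc => ?_
      obtain ⟨b, hb1, hb2⟩ := exists_between (max_lt hc ha)
      have hb' : b ∈ Set.Ioo (0:ℝ) a := ⟨lt_of_le_of_lt (le_max_right c 0) hb1, hb2⟩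
      exact lt_of_lt_of_le (lt_of_le_of_lt (le_max_left c 0) hb1) (hfa b hb')
    have hmem : L + ε/2 ∈ {h : ℝ | 0 < h ∧ a ≤ (μ (quadrant t h)).toReal} :=
      ⟨by linarith, hfa'⟩
    have hfin := le_csSup (landscape_bddAbove μ hμ t ha) hmem
    have : L + ε/2 ≤ L := hfin
    linarith
end

section
/- Let μ and ν be q-tame Borel measures on ℝ² that both vanish on the closed lower half-plane, i.e. μ({(x,y) ∈ ℝ² : y ≤ x}) = 0 and ν({(x,y) ∈ ℝ² : y ≤ x}) = 0. If their continuous persistence landscapes coincide, λ_μ(a,t) = λ_ν(a,t) for all a > 0 and t ∈ ℝ, then μ = ν. (Injectivity of the continuous persistence landscape map on persistence measures.) -/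
open MeasureTheory Set Filter

open Topology in
section
namespace LInj

variable {μ ν : Measure (ℝ × ℝ)}

lemma meas_quadrant (t h : ℝ) : MeasurableSet (quadrant t h) :=
  measurableSet_Iio.prod measurableSet_Ioi

lemma quadrant_subset (t : ℝ) {h h' : ℝ} (hh : h ≤ h') : quadrant t h' ⊆ quadrant t h :=
  Set.prod_mono (Set.Iio_subset_Iio (by linarith)) (Set.Ioi_subset_Ioi (by linarith))

lemma quadrant_eq_iUnion (t h : ℝ) :
    quadrant t h = ⋃ n : ℕ, quadrant t (h + 1 / (n + 1)) := by
  ext p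
  simp only [quadrant, Set.mem_prod, Set.mem_Iio, Set.mem_Ioi, Set.mem_iUnion]
  constructor
  · rintro ⟨h1, h2⟩
    obtain ⟨n, hn⟩ := exists_nat_one_div_lt
      (lt_min (by linarith : (0:ℝ) < t - h - p.1) (by linarith : (0:ℝ) < p.2 - (t + h)))
    have hn1 := lt_of_lt_of_le hn (min_le_left _ _)
    have hn2 := lt_of_lt_of_le hn (min_le_right _ _)
    exact ⟨n, by linarith, by linarith⟩
  · rintro ⟨n, h1, h2⟩
    have hp : 0 < 1 / ((n:ℝ) + 1) := by positivity
    exact ⟨by linarith, by linarith⟩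

lemma measure_quadrant_eq_iSup (μ : Measure (ℝ × ℝ)) (t h : ℝ) :
    μ (quadrant t h) = ⨆ n : ℕ, μ (quadrant t (h + 1 / (n + 1))) := by
  rw [quadrant_eq_iUnion t h]
  refine Monotone.measure_iUnion fun n m hnm => ?_
  refine quadrant_subset t ?_
  have h2 : 1 / ((m:ℝ) + 1) ≤ 1 / ((n:ℝ) + 1) := by
    apply one_div_le_one_div_of_le (by positivity)
    have : (n:ℝ) ≤ m := by exact_mod_cast hnm
    linarith
  linarith

lemma exists_quadrant_small (hμ : QTame μ) (t : ℝ) {a : ℝ} (ha : 0 < a) :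
    ∃ H : ℝ, 0 ≤ H ∧ (μ (quadrant t H)).toReal < a := by
  have hempty : (⋂ n : ℕ, quadrant t n) = (∅ : Set (ℝ × ℝ)) := by
    ext p
    simp only [Set.mem_iInter, Set.mem_empty_iff_false, iff_false, not_forall]
    obtain ⟨n, hn⟩ := exists_nat_gt (t - p.1)
    refine ⟨n, fun hc => ?_⟩
    have := hc.1
    simp only [Set.mem_Iio] at this
    linarith
  have htend : Tendsto (fun n : ℕ => μ (quadrant t n)) atTop (𝓝 0) := by
    have h1 := tendsto_measure_iInter_atTop
      (s := fun n : ℕ => quadrant t n)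
      (fun n => (meas_quadrant t n).nullMeasurableSet)
      (fun n m hnm => quadrant_subset t (by exact_mod_cast hnm))
      ⟨0, by show μ (quadrant t ((0:ℕ):ℝ)) ≠ ⊤; rw [Nat.cast_zero]; exact (hμ t 0 le_rfl).ne⟩
    rw [hempty, measure_empty] at h1
    exact h1
  have hev : ∀ᶠ n : ℕ in atTop, μ (quadrant t n) < ENNReal.ofReal a :=
    htend.eventually_lt_const (ENNReal.ofReal_pos.mpr ha)
  obtain ⟨n, hn⟩ := hev.exists
  exact ⟨n, n.cast_nonneg, ENNReal.toReal_lt_of_lt_ofReal hn⟩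

end LInj
namespace LInj

variable {μ ν : Measure (ℝ × ℝ)}

lemma bddAbove_SS (hμ : QTame μ) {a : ℝ} (t : ℝ) (ha : 0 < a) :
    BddAbove {h : ℝ | 0 < h ∧ a ≤ (μ (quadrant t h)).toReal} := by
  obtain ⟨H, hH0, hHa⟩ := exists_quadrant_small hμ t ha
  refine ⟨H, fun h hh => ?_⟩
  by_contra hcon
  push_neg at hcon
  have h1 : μ (quadrant t h) ≤ μ (quadrant t H) := measure_mono (quadrant_subset t hcon.le)
  have h2 : (μ (quadrant t h)).toReal ≤ (μ (quadrant t H)).toReal :=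
    ENNReal.toReal_mono (hμ t H hH0).ne h1
  linarith [hh.2]

lemma lt_landscape_iff (hμ : QTame μ) {a t h : ℝ} (ha : 0 < a) (hh : 0 ≤ h) :
    h < landscape μ a t ↔ ∃ h', h < h' ∧ a ≤ (μ (quadrant t h')).toReal := by
  constructor
  · intro hlt
    have hne : {h : ℝ | 0 < h ∧ a ≤ (μ (quadrant t h)).toReal}.Nonempty := by
      by_contra hemp
      rw [Set.not_nonempty_iff_eq_empty] at hemp
      rw [landscape, hemp, Real.sSup_empty] at hlt
      linarith
    obtain ⟨h', hh', hlt'⟩ := exists_lt_of_lt_csSup hne hlt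
    exact ⟨h', hlt', hh'.2⟩
  · rintro ⟨h', hlt, hle⟩
    have hmem : h' ∈ {h : ℝ | 0 < h ∧ a ≤ (μ (quadrant t h)).toReal} :=
      ⟨lt_of_le_of_lt hh hlt, hle⟩
    exact lt_of_lt_of_le hlt (le_csSup (bddAbove_SS hμ t ha) hmem)

lemma a_le_iff (hμ : QTame μ) {a t h : ℝ} (ha : 0 < a) (hh : 0 ≤ h) :
    a ≤ (μ (quadrant t h)).toReal ↔ ∀ a', 0 < a' → a' < a → h < landscape μ a' t := by
  constructor
  · intro hle a' ha' haa'
    rw [lt_landscape_iff hμ ha' hh]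
    by_contra hcon
    push_neg at hcon
    have hsup : μ (quadrant t h) ≤ ENNReal.ofReal a' := by
      rw [measure_quadrant_eq_iSup μ t h]
      refine iSup_le fun n => ?_
      have hn : h < h + 1 / ((n:ℕ) + 1) := by
        have : (0:ℝ) < 1 / ((n:ℝ) + 1) := by positivity
        linarith
      have hfin : μ (quadrant t (h + 1 / ((n:ℕ) + 1))) ≠ ⊤ :=
        (hμ t _ (by positivity)).ne
      have hlt := hcon _ hn
      rw [← ENNReal.ofReal_toReal hfin]
      exact ENNReal.ofReal_le_ofReal hlt.le
    have hle' : (μ (quadrant t h)).toReal ≤ a' := by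
      calc (μ (quadrant t h)).toReal ≤ (ENNReal.ofReal a').toReal :=
            ENNReal.toReal_mono ENNReal.ofReal_ne_top hsup
        _ = a' := ENNReal.toReal_ofReal ha'.le
    linarith
  · intro hall
    by_contra hcon
    push_neg at hcon
    obtain ⟨a', ha1, ha2⟩ := exists_between hcon
    have ha'pos : 0 < a' := lt_of_le_of_lt ENNReal.toReal_nonneg ha1
    have hlt := hall a' ha'pos ha2
    rw [lt_landscape_iff hμ ha'pos hh] at hlt
    obtain ⟨h', hh', hle⟩ := hlt
    have hmono : (μ (quadrant t h')).toReal ≤ (μ (quadrant t h)).toReal :=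
      ENNReal.toReal_mono (hμ t h hh).ne (measure_mono (quadrant_subset t hh'.le))
    linarith

lemma measure_quadrant_eq (hμ : QTame μ) (hν : QTame ν)
    (heq : ∀ a t : ℝ, 0 < a → landscape μ a t = landscape ν a t)
    (t : ℝ) {h : ℝ} (hh : 0 ≤ h) :
    μ (quadrant t h) = ν (quadrant t h) := by
  have hμf := (hμ t h hh).ne
  have hνf := (hν t h hh).ne
  have key : (μ (quadrant t h)).toReal = (ν (quadrant t h)).toReal := by
    apply le_antisymm
    · rcases le_or_gt (μ (quadrant t h)).toReal 0 with h0 | h0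
      · exact h0.trans ENNReal.toReal_nonneg
      · have h1 := (a_le_iff hμ h0 hh).1 le_rfl
        refine (a_le_iff hν h0 hh).2 fun a' h1' h2' => ?_
        rw [← heq a' t h1']
        exact h1 a' h1' h2'
    · rcases le_or_gt (ν (quadrant t h)).toReal 0 with h0 | h0
      · exact h0.trans ENNReal.toReal_nonneg
      · have h1 := (a_le_iff hν h0 hh).1 le_rfl
        refine (a_le_iff hμ h0 hh).2 fun a' h1' h2' => ?_
        rw [heq a' t h1']
        exact h1 a' h1' h2'
  rw [← ENNReal.ofReal_toReal hμf, ← ENNReal.ofReal_toReal hνf, key]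

end LInj
namespace LInj

variable {μ ν : Measure (ℝ × ℝ)}

/-- A quadrant labelled by its corner `(s, r)`: `Iio s ×ˢ Ioi r`. -/
def Qd (p : ℝ × ℝ) : Set (ℝ × ℝ) := Set.Iio p.1 ×ˢ Set.Ioi p.2

lemma Qd_eq_quadrant (p : ℝ × ℝ) :
    Qd p = quadrant ((p.1 + p.2) / 2) ((p.2 - p.1) / 2) := by
  unfold Qd quadrant
  congr 1
  · congr 1; ring
  · congr 1; ring

lemma meas_Qd (p : ℝ × ℝ) : MeasurableSet (Qd p) :=
  measurableSet_Iio.prod measurableSet_Ioi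

lemma measure_Qd_lt_top (hμ : QTame μ) {p : ℝ × ℝ} (hp : p.1 ≤ p.2) : μ (Qd p) < ⊤ := by
  rw [Qd_eq_quadrant]
  exact hμ _ _ (by linarith)

lemma measure_Qd_eq (hμ : QTame μ) (hν : QTame ν)
    (heq : ∀ a t : ℝ, 0 < a → landscape μ a t = landscape ν a t)
    {p : ℝ × ℝ} (hp : p.1 ≤ p.2) : μ (Qd p) = ν (Qd p) := by
  rw [Qd_eq_quadrant]
  exact measure_quadrant_eq hμ hν heq _ (by linarith)

/-- The union of a list of quadrants. -/
def SL (l : List (ℝ × ℝ)) : Set (ℝ × ℝ) := l.foldr (fun p s => Qd p ∪ s) ∅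

lemma SL_nil : SL ([] : List (ℝ × ℝ)) = ∅ := rfl

lemma SL_cons (p : ℝ × ℝ) (l : List (ℝ × ℝ)) : SL (p :: l) = Qd p ∪ SL l := rfl

lemma meas_SL (l : List (ℝ × ℝ)) : MeasurableSet (SL l) := by
  induction l with
  | nil => simpa [SL_nil] using MeasurableSet.empty
  | cons p l ih => rw [SL_cons]; exact (meas_Qd p).union ih

lemma mem_SL {x : ℝ × ℝ} {l : List (ℝ × ℝ)} : x ∈ SL l ↔ ∃ p ∈ l, x ∈ Qd p := by
  induction l with
  | nil => simp [SL_nil]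
  | cons p l ih => simp [SL_cons, ih, or_and_right, exists_or]

lemma SL_subset_U {l : List (ℝ × ℝ)} (hl : ∀ p ∈ l, p.1 ≤ p.2) :
    SL l ⊆ {x : ℝ × ℝ | x.1 < x.2} := by
  intro x hx
  obtain ⟨p, hp, hxp⟩ := mem_SL.1 hx
  obtain ⟨h1, h2⟩ := hxp
  simp only [Set.mem_Iio] at h1
  simp only [Set.mem_Ioi] at h2
  have := hl p hp
  simp only [Set.mem_setOf_eq]
  linarith

lemma measure_SL_lt_top (hμ : QTame μ) {l : List (ℝ × ℝ)} (hl : ∀ p ∈ l, p.1 ≤ p.2) :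
    μ (SL l) < ⊤ := by
  induction l with
  | nil => simp [SL_nil]
  | cons p l ih =>
    rw [SL_cons]
    refine lt_of_le_of_lt (measure_union_le _ _) ?_
    exact ENNReal.add_lt_top.2 ⟨measure_Qd_lt_top hμ (hl p (by simp)),
      ih fun q hq => hl q (by simp [hq])⟩

lemma Qd_inter_Qd (q p : ℝ × ℝ) :
    Qd q ∩ Qd p = Qd (min q.1 p.1, max q.2 p.2) := by
  unfold Qd
  rw [Set.prod_inter_prod, Set.Iio_inter_Iio, Set.Ioi_inter_Ioi]

lemma Qd_inter_SL (q : ℝ × ℝ) (l : List (ℝ × ℝ)) :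
    Qd q ∩ SL l = SL (l.map fun p => (min q.1 p.1, max q.2 p.2)) := by
  induction l with
  | nil => simp [SL_nil]
  | cons p l ih =>
    rw [SL_cons, Set.inter_union_distrib_left, ih, List.map_cons, SL_cons, Qd_inter_Qd]

lemma measure_SL_eq (hμ : QTame μ) (hν : QTame ν)
    (heq : ∀ a t : ℝ, 0 < a → landscape μ a t = landscape ν a t) :
    ∀ (n : ℕ) (l : List (ℝ × ℝ)), l.length = n → (∀ p ∈ l, p.1 ≤ p.2) →
      μ (SL l) = ν (SL l) := by
  intro n
  induction n with
  | zero =>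
    intro l hl _
    rw [List.length_eq_zero_iff.mp hl]
    simp [SL_nil]
  | succ n ih =>
    rintro (_ | ⟨q, l⟩) hlen hval
    · simp at hlen
    · have hq : q.1 ≤ q.2 := hval q (by simp)
      have hlv : ∀ p ∈ l, p.1 ≤ p.2 := fun p hp => hval p (by simp [hp])
      have hlen' : l.length = n := by simpa using hlen
      have hmapval : ∀ p ∈ l.map (fun p => (min q.1 p.1, max q.2 p.2)), p.1 ≤ p.2 := by
        intro p hp
        obtain ⟨r, hr, rfl⟩ := List.mem_map.1 hp
        have hr2 := hlv r hr
        calc (min q.1 r.1, max q.2 r.2).1 ≤ r.1 := min_le_right _ _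
          _ ≤ r.2 := hr2
          _ ≤ (min q.1 r.1, max q.2 r.2).2 := le_max_right _ _
      have h1 : μ (SL (q :: l)) + μ (Qd q ∩ SL l) = μ (Qd q) + μ (SL l) := by
        rw [SL_cons]; exact measure_union_add_inter _ (meas_SL l)
      have h2 : ν (SL (q :: l)) + ν (Qd q ∩ SL l) = ν (Qd q) + ν (SL l) := by
        rw [SL_cons]; exact measure_union_add_inter _ (meas_SL l)
      rw [Qd_inter_SL] at h1 h2
      have e1 : μ (Qd q) = ν (Qd q) := measure_Qd_eq hμ hν heq hq
      have e2 : μ (SL l) = ν (SL l) := ih l hlen' hlv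
      have e3 : μ (SL (l.map fun p => (min q.1 p.1, max q.2 p.2))) =
          ν (SL (l.map fun p => (min q.1 p.1, max q.2 p.2))) :=
        ih _ (by simpa using hlen') hmapval
      have hfin : ν (SL (l.map fun p => (min q.1 p.1, max q.2 p.2))) ≠ ⊤ :=
        (measure_SL_lt_top hν hmapval).ne
      have hcomb : μ (SL (q :: l)) + ν (SL (l.map fun p => (min q.1 p.1, max q.2 p.2)))
          = ν (SL (q :: l)) + ν (SL (l.map fun p => (min q.1 p.1, max q.2 p.2))) := by
        rw [← e3, h1, e1, e2, ← h2, e3]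
      exact WithTop.add_right_cancel hfin hcomb

end LInj
namespace LInj

variable {μ ν : Measure (ℝ × ℝ)}

def genC : Set (Set (ℝ × ℝ)) := {s | ∃ a b : ℝ, s = Set.Iio a ×ˢ Set.Ioi b}

lemma isPiSystem_genC : IsPiSystem genC := by
  rintro s ⟨a, b, rfl⟩ t ⟨a', b', rfl⟩ -
  exact ⟨min a a', max b b',
    by rw [Set.prod_inter_prod, Set.Iio_inter_Iio, Set.Ioi_inter_Ioi]⟩

lemma borel_eq_genC :
    (inferInstance : MeasurableSpace (ℝ × ℝ)) = MeasurableSpace.generateFrom genC := by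
  apply le_antisymm
  · rw [show (inferInstance : MeasurableSpace (ℝ × ℝ)) =
        MeasurableSpace.comap Prod.fst (inferInstance : MeasurableSpace ℝ) ⊔
        MeasurableSpace.comap Prod.snd (inferInstance : MeasurableSpace ℝ) from rfl]
    apply sup_le
    · rw [show (inferInstance : MeasurableSpace ℝ) = borel ℝ from BorelSpace.measurable_eq,
        borel_eq_generateFrom_Iio ℝ, MeasurableSpace.comap_generateFrom]
      apply MeasurableSpace.generateFrom_le
      rintro s ⟨u, ⟨a, rfl⟩, rfl⟩
      have : Prod.fst ⁻¹' (Set.Iio a) = ⋃ n : ℕ, (Set.Iio a ×ˢ Set.Ioi (-(n:ℝ)) : Set (ℝ × ℝ)) := by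
        ext x
        simp only [Set.mem_preimage, Set.mem_Iio, Set.mem_iUnion, Set.mem_prod, Set.mem_Ioi]
        constructor
        · intro hx
          obtain ⟨n, hn⟩ := exists_nat_gt (-x.2)
          exact ⟨n, hx, by linarith⟩
        · rintro ⟨n, hx, -⟩; exact hx
      rw [this]
      exact MeasurableSet.iUnion fun n =>
        MeasurableSpace.measurableSet_generateFrom ⟨a, -(n:ℝ), rfl⟩
    · rw [show (inferInstance : MeasurableSpace ℝ) = borel ℝ from BorelSpace.measurable_eq,
        borel_eq_generateFrom_Ioi ℝ, MeasurableSpace.comap_generateFrom]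
      apply MeasurableSpace.generateFrom_le
      rintro s ⟨u, ⟨b, rfl⟩, rfl⟩
      have : Prod.snd ⁻¹' (Set.Ioi b) = ⋃ n : ℕ, (Set.Iio (n:ℝ) ×ˢ Set.Ioi b : Set (ℝ × ℝ)) := by
        ext x
        simp only [Set.mem_preimage, Set.mem_Ioi, Set.mem_iUnion, Set.mem_prod, Set.mem_Iio]
        constructor
        · intro hx
          obtain ⟨n, hn⟩ := exists_nat_gt x.1
          exact ⟨n, hn, hx⟩
        · rintro ⟨n, -, hx⟩; exact hx
      rw [this]
      exact MeasurableSet.iUnion fun n =>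
        MeasurableSpace.measurableSet_generateFrom ⟨(n:ℝ), b, rfl⟩
  · apply MeasurableSpace.generateFrom_le
    rintro s ⟨a, b, rfl⟩
    exact measurableSet_Iio.prod measurableSet_Ioi

lemma restrict_SL_eq (hμ : QTame μ) (hν : QTame ν)
    (heq : ∀ a t : ℝ, 0 < a → landscape μ a t = landscape ν a t)
    {l : List (ℝ × ℝ)} (hl : ∀ p ∈ l, p.1 ≤ p.2) :
    μ.restrict (SL l) = ν.restrict (SL l) := by
  haveI : IsFiniteMeasure (μ.restrict (SL l)) :=
    ⟨by rw [Measure.restrict_apply_univ]; exact measure_SL_lt_top hμ hl⟩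
  refine MeasureTheory.ext_of_generate_finite genC borel_eq_genC isPiSystem_genC ?_ ?_
  · rintro s ⟨a, b, rfl⟩
    rw [Measure.restrict_apply (measurableSet_Iio.prod measurableSet_Ioi),
      Measure.restrict_apply (measurableSet_Iio.prod measurableSet_Ioi)]
    have hQ : (Set.Iio a ×ˢ Set.Ioi b : Set (ℝ × ℝ)) = Qd (a, b) := rfl
    rw [hQ, Qd_inter_SL]
    refine measure_SL_eq hμ hν heq _ _ rfl ?_
    intro p hp
    obtain ⟨r, hr, rfl⟩ := List.mem_map.1 hp
    have hr2 := hl r hr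
    calc (min (a, b).1 r.1, max (a, b).2 r.2).1 ≤ r.1 := min_le_right _ _
      _ ≤ r.2 := hr2
      _ ≤ (min (a, b).1 r.1, max (a, b).2 r.2).2 := le_max_right _ _
  · rw [Measure.restrict_apply_univ, Measure.restrict_apply_univ]
    exact measure_SL_eq hμ hν heq _ _ rfl hl

end LInj
namespace LInj

variable {μ ν : Measure (ℝ × ℝ)}

noncomputable def enum : ℕ → ℚ × ℚ := (exists_surjective_nat (ℚ × ℚ)).choose

lemma enum_surj : Function.Surjective enum := (exists_surjective_nat (ℚ × ℚ)).choose_spec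

/-- The `n`-th approximating list of rational quadrants. -/
noncomputable def LL (n : ℕ) : List (ℝ × ℝ) :=
  (((List.range n).map enum).filter (fun p => p.1 ≤ p.2)).map
    (fun p => ((p.1 : ℝ), (p.2 : ℝ)))

lemma LL_valid (n : ℕ) : ∀ p ∈ LL n, p.1 ≤ p.2 := by
  intro p hp
  obtain ⟨q, hq, rfl⟩ := List.mem_map.1 hp
  have := (List.mem_filter.1 hq).2
  have hle : q.1 ≤ q.2 := by exact_mod_cast of_decide_eq_true this
  show ((q.1 : ℝ)) ≤ ((q.2 : ℝ))
  exact_mod_cast hle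

lemma LL_mono {n m : ℕ} (hnm : n ≤ m) {p : ℝ × ℝ} (hp : p ∈ LL n) : p ∈ LL m := by
  obtain ⟨q, hq, rfl⟩ := List.mem_map.1 hp
  refine List.mem_map.2 ⟨q, ?_, rfl⟩
  rw [List.mem_filter] at hq ⊢
  refine ⟨?_, hq.2⟩
  obtain ⟨i, hi, rfl⟩ := List.mem_map.1 hq.1
  exact List.mem_map.2 ⟨i, List.mem_range.2 (lt_of_lt_of_le (List.mem_range.1 hi) hnm), rfl⟩

lemma SL_LL_mono : Monotone fun n => SL (LL n) := by
  intro n m hnm x hx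
  obtain ⟨p, hp, hxp⟩ := mem_SL.1 hx
  exact mem_SL.2 ⟨p, LL_mono hnm hp, hxp⟩

lemma iUnion_SL_LL : (⋃ n, SL (LL n)) = {x : ℝ × ℝ | x.1 < x.2} := by
  apply Set.Subset.antisymm
  · exact Set.iUnion_subset fun n => SL_subset_U (LL_valid n)
  · rintro ⟨x, y⟩ hxy
    simp only [Set.mem_setOf_eq] at hxy
    obtain ⟨s, hs1, hs2⟩ := exists_rat_btwn hxy
    obtain ⟨r, hr1, hr2⟩ := exists_rat_btwn hs2
    obtain ⟨i, hi⟩ := enum_surj (s, r)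
    refine Set.mem_iUnion.2 ⟨i + 1, mem_SL.2 ⟨((s : ℝ), (r : ℝ)), ?_, ?_⟩⟩
    · refine List.mem_map.2 ⟨(s, r), ?_, rfl⟩
      rw [List.mem_filter]
      constructor
      · exact List.mem_map.2 ⟨i, List.mem_range.2 (Nat.lt_succ_self i), hi⟩
      · have : s ≤ r := by exact_mod_cast le_of_lt (by exact_mod_cast hr1)
        exact decide_eq_true this
    · exact ⟨hs1, hr2⟩

theorem landscape_injective_aux (hμ : QTame μ) (hν : QTame ν)
    (hμ0 : μ {p : ℝ × ℝ | p.2 ≤ p.1} = 0) (hν0 : ν {p : ℝ × ℝ | p.2 ≤ p.1} = 0)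
    (heq : ∀ a t : ℝ, 0 < a → landscape μ a t = landscape ν a t) :
    μ = ν := by
  have hUmeas : MeasurableSet {x : ℝ × ℝ | x.1 < x.2} :=
    measurableSet_lt measurable_fst measurable_snd
  have hUc : {x : ℝ × ℝ | x.1 < x.2}ᶜ = {p : ℝ × ℝ | p.2 ≤ p.1} := by
    ext x; simp [not_lt]
  ext E hE
  have key : ∀ n : ℕ, μ (E ∩ SL (LL n)) = ν (E ∩ SL (LL n)) := by
    intro n
    have hres := restrict_SL_eq hμ hν heq (LL_valid n)
    calc μ (E ∩ SL (LL n)) = μ.restrict (SL (LL n)) E := (Measure.restrict_apply hE).symm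
      _ = ν.restrict (SL (LL n)) E := by rw [hres]
      _ = ν (E ∩ SL (LL n)) := Measure.restrict_apply hE
  have hsplit : ∀ (σ : Measure (ℝ × ℝ)), σ {p : ℝ × ℝ | p.2 ≤ p.1} = 0 →
      σ E = σ (E ∩ {x : ℝ × ℝ | x.1 < x.2}) := by
    intro σ hσ
    have hdiff : σ (E \ {x : ℝ × ℝ | x.1 < x.2}) = 0 :=
      measure_mono_null (fun x hx => by rw [← hUc]; exact hx.2) hσ
    have := measure_inter_add_diff E hUmeas (μ := σ)
    rw [hdiff, add_zero] at this
    exact this.symm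
  have hEU : E ∩ {x : ℝ × ℝ | x.1 < x.2} = ⋃ n, E ∩ SL (LL n) := by
    rw [← Set.inter_iUnion, iUnion_SL_LL]
  have hmono : Monotone fun n => E ∩ SL (LL n) :=
    fun n m hnm => Set.inter_subset_inter_right E (SL_LL_mono hnm)
  calc μ E = μ (E ∩ {x : ℝ × ℝ | x.1 < x.2}) := hsplit μ hμ0
    _ = ⨆ n, μ (E ∩ SL (LL n)) := by rw [hEU]; exact hmono.measure_iUnion
    _ = ⨆ n, ν (E ∩ SL (LL n)) := by simp only [key]
    _ = ν (E ∩ {x : ℝ × ℝ | x.1 < x.2}) := by rw [hEU]; exact hmono.measure_iUnion.symm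
    _ = ν E := (hsplit ν hν0).symm

end LInj


end

/-- Injectivity of the continuous persistence landscape on persistence measures. -/
theorem landscape_injective (μ ν : Measure (ℝ × ℝ)) (hμ : QTame μ) (hν : QTame ν)
    (hμ0 : μ {p : ℝ × ℝ | p.2 ≤ p.1} = 0) (hν0 : ν {p : ℝ × ℝ | p.2 ≤ p.1} = 0)
    (heq : ∀ a t : ℝ, 0 < a → landscape μ a t = landscape ν a t) :
    μ = ν := LInj.landscape_injective_aux hμ hν hμ0 hν0 heq
end

section
/- Let H := {(x,y) ∈ ℝ² : x < y} with its subspace topology, and let E := {Q_{t,h} : t ∈ ℝ, h ≥ 0} (each Q_{t,h} is a subset of H). Then the trace on H of the σ-algebra of subsets of ℝ² generated by E equals the Borel σ-algebra of H: {B ∩ H : B in the σ-algebra generated by E} is exactly the collection of Borel subsets of H. -/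
open MeasureTheory Set

/-- The quadrants `Q_{t,h}` for `t ∈ ℝ`, `h ≥ 0`. -/
def quadrantFamily : Set (Set (ℝ × ℝ)) :=
  {s | ∃ t h : ℝ, 0 ≤ h ∧ s = quadrant t h}

/-- The open half-plane `H = {(x,y) : x < y}` with its subspace topology. -/
abbrev HalfPlane : Type := {p : ℝ × ℝ // p.1 < p.2}

lemma Iio_prod_Ioi_mem_quadrantFamily {a b : ℝ} (hab : a ≤ b) :
    Set.Iio a ×ˢ Set.Ioi b ∈ quadrantFamily := by
  refine ⟨(a + b) / 2, (b - a) / 2, by linarith, ?_⟩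
  have h1 : (a + b) / 2 - (b - a) / 2 = a := by ring
  have h2 : (a + b) / 2 + (b - a) / 2 = b := by ring
  rw [quadrant, h1, h2]

lemma quadrant_preimage_measurable {a b : ℝ} (hab : a ≤ b) :
    MeasurableSet[MeasurableSpace.comap (Subtype.val : HalfPlane → ℝ × ℝ)
      (MeasurableSpace.generateFrom quadrantFamily)]
      (Subtype.val ⁻¹' (Set.Iio a ×ˢ Set.Ioi b) : Set HalfPlane) :=
  ⟨_, MeasurableSpace.measurableSet_generateFrom (Iio_prod_Ioi_mem_quadrantFamily hab), rfl⟩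

/-- Key: `{z ∈ H | z.1 < p}` is in the trace σ-algebra. -/
lemma fst_lt_measurable (p : ℝ) :
    MeasurableSet[MeasurableSpace.comap (Subtype.val : HalfPlane → ℝ × ℝ)
      (MeasurableSpace.generateFrom quadrantFamily)]
      {z : HalfPlane | z.1.1 < p} := by
  have : {z : HalfPlane | z.1.1 < p} =
      ⋃ i : ℚ × ℚ, if (i.1 : ℝ) ≤ (i.2 : ℝ) ∧ (i.1 : ℝ) ≤ p then
        (Subtype.val ⁻¹' (Set.Iio (i.1 : ℝ) ×ˢ Set.Ioi (i.2 : ℝ)) : Set HalfPlane) else ∅ := by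
    ext z
    simp only [mem_setOf_eq, mem_iUnion]
    constructor
    · intro hz
      have hxy := z.2
      obtain ⟨b, hxb, hby⟩ := exists_rat_btwn hxy
      obtain ⟨a, hxa, hab⟩ := exists_rat_btwn (lt_min hz hxb)
      refine ⟨(a, b), ?_⟩
      rw [if_pos ⟨le_of_lt (hab.trans_le (min_le_right _ _)),
        le_of_lt (hab.trans_le (min_le_left _ _))⟩]
      exact ⟨hxa, hby⟩
    · rintro ⟨i, hi⟩
      split_ifs at hi with h
      · exact lt_of_lt_of_le hi.1 h.2
      · exact absurd hi (notMem_empty _)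
  rw [this]
  refine MeasurableSet.iUnion fun i => ?_
  split_ifs with h
  · exact quadrant_preimage_measurable h.1
  · exact MeasurableSpace.measurableSet_empty _

/-- Key: `{z ∈ H | q < z.2}` is in the trace σ-algebra. -/
lemma snd_gt_measurable (q : ℝ) :
    MeasurableSet[MeasurableSpace.comap (Subtype.val : HalfPlane → ℝ × ℝ)
      (MeasurableSpace.generateFrom quadrantFamily)]
      {z : HalfPlane | q < z.1.2} := by
  have : {z : HalfPlane | q < z.1.2} =
      ⋃ i : ℚ × ℚ, if (i.1 : ℝ) ≤ (i.2 : ℝ) ∧ q ≤ (i.2 : ℝ) then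
        (Subtype.val ⁻¹' (Set.Iio (i.1 : ℝ) ×ˢ Set.Ioi (i.2 : ℝ)) : Set HalfPlane) else ∅ := by
    ext z
    simp only [mem_setOf_eq, mem_iUnion]
    constructor
    · intro hz
      have hxy := z.2
      obtain ⟨b, hb1, hby⟩ := exists_rat_btwn (max_lt hxy hz)
      have hxb : z.1.1 < (b : ℝ) := (le_max_left _ _).trans_lt hb1
      obtain ⟨a, hxa, hab⟩ := exists_rat_btwn hxb
      refine ⟨(a, b), ?_⟩
      rw [if_pos ⟨le_of_lt hab, le_of_lt ((le_max_right _ _).trans_lt hb1)⟩]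
      exact ⟨hxa, hby⟩
    · rintro ⟨i, hi⟩
      split_ifs at hi with h
      · exact lt_of_le_of_lt h.2 hi.2
      · exact absurd hi (notMem_empty _)
  rw [this]
  refine MeasurableSet.iUnion fun i => ?_
  split_ifs with h
  · exact quadrant_preimage_measurable h.1
  · exact MeasurableSpace.measurableSet_empty _

/-- The trace on the open half-plane `H = {(x,y) : x < y}` of the σ-algebra of
subsets of `ℝ²` generated by the quadrants (i.e. its `comap` along the
inclusion, whose measurable sets are exactly the sets `B ∩ H` with `B` in the
generated σ-algebra) is the Borel σ-algebra of `H`. -/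
theorem trace_of_quadrant_sigma_algebra :
    MeasurableSpace.comap (Subtype.val : HalfPlane → ℝ × ℝ)
        (MeasurableSpace.generateFrom quadrantFamily) =
      borel HalfPlane := by
  haveI : BorelSpace HalfPlane := Subtype.borelSpace {p : ℝ × ℝ | p.1 < p.2}
  have hbH : borel HalfPlane =
      MeasurableSpace.comap (Subtype.val : HalfPlane → ℝ × ℝ) Prod.instMeasurableSpace := by
    rw [← BorelSpace.measurable_eq (α := HalfPlane)]
    rfl
  apply le_antisymm
  · rw [hbH]
    apply MeasurableSpace.comap_mono
    have hle : MeasurableSpace.generateFrom quadrantFamily ≤ borel (ℝ × ℝ) := by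
      apply MeasurableSpace.generateFrom_le
      rintro s ⟨t, h, _, rfl⟩
      exact MeasurableSpace.measurableSet_generateFrom (isOpen_Iio.prod isOpen_Ioi)
    exact hle.trans_eq (BorelSpace.measurable_eq (α := ℝ × ℝ)).symm
  · rw [hbH]
    have hprod : (Prod.instMeasurableSpace : MeasurableSpace (ℝ × ℝ)) =
        MeasurableSpace.comap Prod.fst (borel ℝ) ⊔ MeasurableSpace.comap Prod.snd (borel ℝ) := by
      rw [← BorelSpace.measurable_eq (α := ℝ)]
      rfl
    rw [hprod, MeasurableSpace.comap_sup, sup_le_iff, MeasurableSpace.comap_comp,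
      MeasurableSpace.comap_comp]
    constructor
    · rw [borel_eq_generateFrom_Iio ℝ, MeasurableSpace.comap_generateFrom]
      apply MeasurableSpace.generateFrom_le
      rintro s ⟨_, ⟨p, rfl⟩, rfl⟩
      exact fst_lt_measurable p
    · rw [borel_eq_generateFrom_Ioi ℝ, MeasurableSpace.comap_generateFrom]
      apply MeasurableSpace.generateFrom_le
      rintro s ⟨_, ⟨q, rfl⟩, rfl⟩
      exact snd_gt_measurable q
end

section
/- For x = (x₁,x₂) and y = (y₁,y₂) in ℝ² with x₁ ≤ x₂ and y₁ ≤ y₂, let T_x := {(p,q) ∈ ℝ² : x₁ ≤ p ≤ q ≤ x₂} and T_y := {(p,q) ∈ ℝ² : y₁ ≤ p ≤ q ≤ y₂} be the closed triangles these points span with the diagonal. Then the two-dimensional Lebesgue measure of the symmetric difference T_x Δ T_y equals d_rk(x,y) = (1/2)(x₂−x₁)² + (1/2)(y₂−y₁)² − max(min(x₂,y₂) − max(x₁,y₁), 0)². -/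
open MeasureTheory Set

lemma measurableSet_tri (a b : ℝ) :
    MeasurableSet {p : ℝ × ℝ | a ≤ p.1 ∧ p.1 ≤ p.2 ∧ p.2 ≤ b} := by
  refine MeasurableSet.inter ?_ (MeasurableSet.inter ?_ ?_)
  · exact measurableSet_le measurable_const measurable_fst
  · exact measurableSet_le measurable_fst measurable_snd
  · exact measurableSet_le measurable_snd measurable_const

lemma triVol (a b : ℝ) (h : a ≤ b) :
    volume {p : ℝ × ℝ | a ≤ p.1 ∧ p.1 ≤ p.2 ∧ p.2 ≤ b}
      = ENNReal.ofReal ((1 / 2) * (b - a) ^ 2) := by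
  rw [Measure.volume_eq_prod, Measure.prod_apply (measurableSet_tri a b)]
  have hslice : ∀ p : ℝ, volume (Prod.mk p ⁻¹' {p : ℝ × ℝ | a ≤ p.1 ∧ p.1 ≤ p.2 ∧ p.2 ≤ b})
      = Set.indicator (Icc a b) (fun t => ENNReal.ofReal (b - t)) p := by
    intro p
    by_cases hp : a ≤ p
    · have : Prod.mk p ⁻¹' {p : ℝ × ℝ | a ≤ p.1 ∧ p.1 ≤ p.2 ∧ p.2 ≤ b} = Icc p b := by
        ext q; simp [hp, Icc]
      rw [this, Real.volume_Icc]
      by_cases hpb : p ≤ b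
      · rw [Set.indicator_of_mem (Set.mem_Icc.mpr ⟨hp, hpb⟩)]
      · rw [Set.indicator_of_notMem (by simp [hpb]), ENNReal.ofReal_eq_zero]
        linarith
    · have : Prod.mk p ⁻¹' {p : ℝ × ℝ | a ≤ p.1 ∧ p.1 ≤ p.2 ∧ p.2 ≤ b} = ∅ := by
        ext q; simp [hp]
      rw [this, Set.indicator_of_notMem (by simp [hp])]
      simp
  simp_rw [hslice]
  rw [lintegral_indicator measurableSet_Icc]
  have hInt : IntegrableOn (fun t => b - t) (Icc a b) volume :=
    (continuous_const.sub continuous_id).continuousOn.integrableOn_Icc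
  rw [← MeasureTheory.ofReal_integral_eq_lintegral_ofReal hInt
      ((ae_restrict_iff' measurableSet_Icc).mpr (ae_of_all _ fun t ht => by
        simp only [Pi.zero_apply]; linarith [ht.2]))]
  congr 1
  rw [MeasureTheory.integral_Icc_eq_integral_Ioc, ← intervalIntegral.integral_of_le h]
  have : (∫ t in a..b, (b - t)) = (1/2) * (b - a)^2 := by
    rw [intervalIntegral.integral_sub intervalIntegrable_const intervalIntegral.intervalIntegrable_id]
    simp [integral_id]
    ring
  rw [this]

lemma triVol' (a b : ℝ) :
    volume {p : ℝ × ℝ | a ≤ p.1 ∧ p.1 ≤ p.2 ∧ p.2 ≤ b}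
      = ENNReal.ofReal ((1 / 2) * (max (b - a) 0) ^ 2) := by
  rcases le_or_gt a b with h | h
  · rw [triVol a b h, max_eq_left (by linarith)]
  · have he : {p : ℝ × ℝ | a ≤ p.1 ∧ p.1 ≤ p.2 ∧ p.2 ≤ b} = ∅ := by
      ext p; simp only [mem_setOf_eq, mem_empty_iff_false, iff_false]
      rintro ⟨h1, h2, h3⟩; linarith
    rw [he, max_eq_right (by linarith)]
    simp

/-- The rank metric `d_rk` on points of the half-plane. -/
noncomputable def drk (x y : ℝ × ℝ) : ℝ :=
  (1 / 2) * (x.2 - x.1) ^ 2 + (1 / 2) * (y.2 - y.1) ^ 2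
    - (max (min x.2 y.2 - max x.1 y.1) 0) ^ 2

/-- The closed triangle that `x = (x₁,x₂)` spans with the diagonal:
`{(p,q) : x₁ ≤ p ≤ q ≤ x₂}`. -/
def diagTriangle (x : ℝ × ℝ) : Set (ℝ × ℝ) :=
  {p : ℝ × ℝ | x.1 ≤ p.1 ∧ p.1 ≤ p.2 ∧ p.2 ≤ x.2}

/-- The Lebesgue measure of the symmetric difference of the two triangles that
`x` and `y` span with the diagonal equals the rank metric `d_rk(x,y)`. -/
theorem volume_symmDiff_triangles_eq_drk (x y : ℝ × ℝ)
    (hx : x.1 ≤ x.2) (hy : y.1 ≤ y.2) :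
    volume ((diagTriangle x \ diagTriangle y) ∪ (diagTriangle y \ diagTriangle x)) =
      ENNReal.ofReal (drk x y) := by
  have hmA : MeasurableSet (diagTriangle x) := measurableSet_tri x.1 x.2
  have hmB : MeasurableSet (diagTriangle y) := measurableSet_tri y.1 y.2
  set m : ℝ := max (min x.2 y.2 - max x.1 y.1) 0 with hm
  have hI : diagTriangle x ∩ diagTriangle y
      = {p : ℝ × ℝ | max x.1 y.1 ≤ p.1 ∧ p.1 ≤ p.2 ∧ p.2 ≤ min x.2 y.2} := by
    ext p
    simp only [diagTriangle, mem_inter_iff, mem_setOf_eq, max_le_iff, le_min_iff]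
    tauto
  have hvA : volume (diagTriangle x) = ENNReal.ofReal ((1/2) * (x.2 - x.1)^2) := by
    rw [show diagTriangle x = {p : ℝ × ℝ | x.1 ≤ p.1 ∧ p.1 ≤ p.2 ∧ p.2 ≤ x.2} from rfl,
      triVol _ _ hx]
  have hvB : volume (diagTriangle y) = ENNReal.ofReal ((1/2) * (y.2 - y.1)^2) := by
    rw [show diagTriangle y = {p : ℝ × ℝ | y.1 ≤ p.1 ∧ p.1 ≤ p.2 ∧ p.2 ≤ y.2} from rfl,
      triVol _ _ hy]
  have hvI : volume (diagTriangle x ∩ diagTriangle y) = ENNReal.ofReal ((1/2) * m^2) := by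
    rw [hI, triVol']
  have hIfin : volume (diagTriangle x ∩ diagTriangle y) ≠ ⊤ := by
    rw [hvI]; exact ENNReal.ofReal_ne_top
  have hd1 : volume (diagTriangle x \ diagTriangle y)
      = ENNReal.ofReal ((1/2) * (x.2 - x.1)^2) - ENNReal.ofReal ((1/2) * m^2) := by
    rw [← hvA, ← hvI, show diagTriangle x \ diagTriangle y
        = diagTriangle x \ (diagTriangle x ∩ diagTriangle y) by rw [diff_self_inter]]
    exact measure_diff inter_subset_left (hmA.inter hmB).nullMeasurableSet hIfin
  have hd2 : volume (diagTriangle y \ diagTriangle x)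
      = ENNReal.ofReal ((1/2) * (y.2 - y.1)^2) - ENNReal.ofReal ((1/2) * m^2) := by
    rw [← hvB, ← hvI, show diagTriangle y \ diagTriangle x
        = diagTriangle y \ (diagTriangle x ∩ diagTriangle y) by
          rw [inter_comm, diff_self_inter]]
    exact measure_diff inter_subset_right (hmA.inter hmB).nullMeasurableSet hIfin
  have hmx : m ≤ x.2 - x.1 := by
    apply max_le _ (by linarith)
    have := min_le_left x.2 y.2
    have := le_max_left x.1 y.1
    linarith
  have hmy : m ≤ y.2 - y.1 := by
    apply max_le _ (by linarith)
    have := min_le_right x.2 y.2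
    have := le_max_right x.1 y.1
    linarith
  have hm0 : 0 ≤ m := le_max_right _ _
  rw [measure_union (disjoint_sdiff_sdiff) (hmB.diff hmA), hd1, hd2,
    ← ENNReal.ofReal_sub _ (by positivity), ← ENNReal.ofReal_sub _ (by positivity),
    ← ENNReal.ofReal_add (by nlinarith) (by nlinarith)]
  congr 1
  simp only [drk]
  ring
end
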